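/- For every n ≥ 2, the composite map h = d ∘ c restricted to S^n is a 4-Lipschitz (4-contracting) surjection of S^n onto S^{n−1} ⊂ ℝ^n; moreover h maps the subsphere {x ∈ S^n : x_1 = ⋯ = x_{n−1} = 0} to the single point (0, …, 0, 1) ∈ S^{n−1} and the subsphere {x ∈ S^n : x_n = x_{n+1} = 0} to the single point (0, …, 0, −1) ∈ S^{n−1}. -/

import Mathlib

/-!
Split `x ∈ ℝ^{n+1}` as `(v, p, q)` with `v ∈ ℝ^{n-1}` and put `a = √(p² + q²)`. Then
`h x = (2a v, 2a² - 1)`, and on the sphere `‖v‖² + a² = 1`. The crushing map is 1-Lipschitz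
(reverse triangle inequality in the `(p, q)`-plane), and for the doubling map on pairs `(v, a)` with
`‖v‖² + a² = 1` the exact identity
`‖2a v - 2b w‖² + (2a² - 2b²)² = 4ab ‖v - w‖² + 4(1 + ab)(a - b)²` with `ab ≤ 1` gives the
factor 4. A point `(u, β)` of `S^{n-1}` is hit by `v = u / 2a`, `a = √((1 + β)/2)`.
-/

/-- The spherical crushing map `c : ℝ^{n+1} → ℝ^{n+1}`,
`c(x_1, …, x_{n+1}) = (x_1, …, x_{n−1}, √(x_n² + x_{n+1}²), 0)`
(here coordinates `x_1, …, x_{n+1}` correspond to indices `0, …, n`). -/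
noncomputable def crush (n : ℕ) (x : EuclideanSpace ℝ (Fin (n + 1))) :
    EuclideanSpace ℝ (Fin (n + 1)) := WithLp.toLp 2 fun i =>
  if (i : ℕ) < n - 1 then x i
  else if (i : ℕ) = n - 1 then
    Real.sqrt ((x ⟨n - 1, by omega⟩) ^ 2 + (x ⟨n, by omega⟩) ^ 2)
  else 0

/-- The angle-doubling map `d : ℝ^{n+1} → ℝ^n`,
`d(x_1, …, x_{n+1}) = (2x_n x_1, …, 2x_n x_{n−1}, 2x_n² − 1)`. -/
noncomputable def doubling (n : ℕ) (x : EuclideanSpace ℝ (Fin (n + 1))) :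
    EuclideanSpace ℝ (Fin n) := WithLp.toLp 2 fun j =>
  if (j : ℕ) < n - 1 then 2 * x ⟨n - 1, by omega⟩ * x (Fin.castSucc j)
  else 2 * (x ⟨n - 1, by omega⟩) ^ 2 - 1

/-- The point `(0, …, 0, 1) ∈ S^{n−1} ⊂ ℝ^n`. -/
def northPole (n : ℕ) : EuclideanSpace ℝ (Fin n) := WithLp.toLp 2 fun j =>
  if (j : ℕ) = n - 1 then 1 else 0

/-- The point `(0, …, 0, −1) ∈ S^{n−1} ⊂ ℝ^n`. -/
def southPole (n : ℕ) : EuclideanSpace ℝ (Fin n) := WithLp.toLp 2 fun j =>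
  if (j : ℕ) = n - 1 then -1 else 0

open Metric

section DoublingModel

variable {E : Type*} [NormedAddCommGroup E] [InnerProductSpace ℝ E]

theorem norm_sq_doubling_add_sq {v : E} {a : ℝ} (h : ‖v‖ ^ 2 + a ^ 2 = 1) :
    ‖(2 * a) • v‖ ^ 2 + (2 * a ^ 2 - 1) ^ 2 = 1 := by
  rw [norm_smul, mul_pow, Real.norm_eq_abs, sq_abs]
  linear_combination (4 * a ^ 2) * h

theorem doubling_dist_sq_eq {v w : E} {a b : ℝ}
    (hv : ‖v‖ ^ 2 + a ^ 2 = 1) (hw : ‖w‖ ^ 2 + b ^ 2 = 1) :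
    ‖(2 * a) • v - (2 * b) • w‖ ^ 2 + ((2 * a ^ 2 - 1) - (2 * b ^ 2 - 1)) ^ 2 =
      4 * (a * b) * ‖v - w‖ ^ 2 + 4 * (1 + a * b) * (a - b) ^ 2 := by
  rw [norm_sub_sq_real, norm_sub_sq_real, norm_smul, norm_smul, inner_smul_left,
    inner_smul_right, Real.norm_eq_abs, Real.norm_eq_abs, mul_pow, mul_pow, sq_abs, sq_abs,
    conj_trivial]
  linear_combination (4 * a * (a - b)) * hv - (4 * b * (a - b)) * hw

theorem doubling_dist_sq_le {v w : E} {a b : ℝ}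
    (hv : ‖v‖ ^ 2 + a ^ 2 = 1) (hw : ‖w‖ ^ 2 + b ^ 2 = 1) :
    ‖(2 * a) • v - (2 * b) • w‖ ^ 2 + ((2 * a ^ 2 - 1) - (2 * b ^ 2 - 1)) ^ 2 ≤
      16 * (‖v - w‖ ^ 2 + (a - b) ^ 2) := by
  have hab : a * b ≤ 1 := by nlinarith [sq_nonneg ‖v‖, sq_nonneg ‖w‖, sq_nonneg (a - b)]
  rw [doubling_dist_sq_eq hv hw]
  nlinarith [sq_nonneg ‖v - w‖, sq_nonneg (a - b)]

theorem exists_doubling_eq [Nontrivial E] {u : E} {β : ℝ} (h : ‖u‖ ^ 2 + β ^ 2 = 1) :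
    ∃ v : E, ∃ a : ℝ, 0 ≤ a ∧ ‖v‖ ^ 2 + a ^ 2 = 1 ∧ (2 * a) • v = u ∧ 2 * a ^ 2 - 1 = β := by
  rcases eq_or_ne β (-1) with rfl | hβ
  · obtain ⟨v, hv⟩ := exists_norm_eq E zero_le_one
    have hu : u = 0 := by simpa using h
    exact ⟨v, 0, le_rfl, by simp [hv], by simp [hu], by norm_num⟩
  have hβ' : 0 < 1 + β := by
    have : -1 < β := hβ.symm.lt_of_le (by nlinarith [sq_nonneg ‖u‖])
    linarith
  set a := √((1 + β) / 2)
  have ha : 0 < a := Real.sqrt_pos.2 (by linarith)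
  have ha2 : a ^ 2 = (1 + β) / 2 := Real.sq_sqrt (by linarith)
  refine ⟨(2 * a)⁻¹ • u, a, ha.le, ?_, ?_, by linarith⟩
  · rw [norm_smul, mul_pow, norm_inv, Real.norm_eq_abs, abs_of_pos (by positivity), inv_pow,
      mul_pow, ha2]
    field_simp
    nlinarith
  · rw [smul_smul, mul_inv_cancel₀ (by positivity), one_smul]

end DoublingModel

namespace EuclideanSpace

variable {k : ℕ}

def snoc (u : EuclideanSpace ℝ (Fin k)) (t : ℝ) : EuclideanSpace ℝ (Fin (k + 1)) :=
  WithLp.toLp 2 (Fin.snoc u.ofLp t)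

@[simp]
theorem snoc_castSucc (u : EuclideanSpace ℝ (Fin k)) (t : ℝ) (j : Fin k) :
    snoc u t j.castSucc = u j := by
  simp [snoc]

@[simp]
theorem snoc_last (u : EuclideanSpace ℝ (Fin k)) (t : ℝ) : snoc u t (Fin.last k) = t := by
  simp [snoc]

@[simp]
theorem snoc_apply_self (u : EuclideanSpace ℝ (Fin k)) (t : ℝ) (h : k < k + 1) :
    snoc u t ⟨k, h⟩ = t :=
  snoc_last u t

@[simp]
theorem snoc_snoc_apply_self (u : EuclideanSpace ℝ (Fin k)) (s t : ℝ) (h : k < k + 2) :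
    snoc (snoc u s) t ⟨k, h⟩ = s :=
  (snoc_castSucc _ t (Fin.last k)).trans (snoc_last u s)

theorem exists_eq_snoc (x : EuclideanSpace ℝ (Fin (k + 1))) :
    ∃ u t, x = snoc u t :=
  ⟨WithLp.toLp 2 (Fin.init x.ofLp), x (Fin.last k), by ext i; simp [snoc]⟩

theorem snoc_sub_snoc (u u' : EuclideanSpace ℝ (Fin k)) (t t' : ℝ) :
    snoc u t - snoc u' t' = snoc (u - u') (t - t') := by
  ext i
  induction i using Fin.lastCases <;> simp

theorem norm_snoc_sq (u : EuclideanSpace ℝ (Fin k)) (t : ℝ) :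
    ‖snoc u t‖ ^ 2 = ‖u‖ ^ 2 + t ^ 2 := by
  simp [real_norm_sq_eq, Fin.sum_univ_castSucc]

theorem dist_snoc_sq (u u' : EuclideanSpace ℝ (Fin k)) (t t' : ℝ) :
    dist (snoc u t) (snoc u' t') ^ 2 = dist u u' ^ 2 + (t - t') ^ 2 := by
  rw [dist_eq_norm, dist_eq_norm, snoc_sub_snoc, norm_snoc_sq]

theorem snoc_mem_sphere_iff (u : EuclideanSpace ℝ (Fin k)) (t : ℝ) :
    snoc u t ∈ sphere 0 1 ↔ ‖u‖ ^ 2 + t ^ 2 = 1 := by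
  rw [mem_sphere_zero_iff_norm, ← norm_snoc_sq,
    pow_eq_one_iff_of_nonneg (norm_nonneg _) two_ne_zero]

end EuclideanSpace

open EuclideanSpace

theorem northPole_eq_snoc (k : ℕ) : northPole (k + 1) = snoc 0 1 := by
  ext i
  induction i using Fin.lastCases <;> simp [northPole, Nat.ne_of_lt]

theorem southPole_eq_snoc (k : ℕ) : southPole (k + 1) = snoc 0 (-1) := by
  ext i
  induction i using Fin.lastCases <;> simp [southPole, Nat.ne_of_lt]

theorem doubling_crush_snoc_snoc {m : ℕ} (v : EuclideanSpace ℝ (Fin (m + 1))) (p q : ℝ) :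
    doubling (m + 2) (crush (m + 2) (snoc (snoc v p) q)) =
      snoc ((2 * √(p ^ 2 + q ^ 2)) • v) (2 * √(p ^ 2 + q ^ 2) ^ 2 - 1) := by
  ext i
  induction i using Fin.lastCases with
  | last => simp [doubling, crush]
  | cast j => simp [doubling, crush, Fin.is_le]

theorem snoc_snoc_mem_sphere_iff {m : ℕ} (v : EuclideanSpace ℝ (Fin m)) (p q : ℝ) :
    snoc (snoc v p) q ∈ sphere 0 1 ↔ ‖v‖ ^ 2 + √(p ^ 2 + q ^ 2) ^ 2 = 1 := by
  rw [snoc_mem_sphere_iff, norm_snoc_sq, Real.sq_sqrt (by positivity), add_assoc]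

theorem sq_sqrt_sub_sqrt_le (p q r s : ℝ) :
    (√(p ^ 2 + q ^ 2) - √(r ^ 2 + s ^ 2)) ^ 2 ≤ (p - r) ^ 2 + (q - s) ^ 2 := by
  have h := abs_norm_sub_norm_le (!₂[p, q]) (!₂[r, s])
  simp only [EuclideanSpace.norm_eq, Fin.sum_univ_two] at h
  simpa [Real.sq_sqrt (by positivity : (0 : ℝ) ≤ (p - r) ^ 2 + (q - s) ^ 2)] using
    pow_le_pow_left₀ (abs_nonneg _) h 2

theorem lipschitzOnWith_doubling_crush (m : ℕ) :
    LipschitzOnWith 4 (doubling (m + 2) ∘ crush (m + 2)) (sphere 0 1) := by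
  refine LipschitzOnWith.of_dist_le_mul fun x hx y hy => ?_
  obtain ⟨x', q, rfl⟩ := exists_eq_snoc x
  obtain ⟨v, p, rfl⟩ := exists_eq_snoc x'
  obtain ⟨y', s, rfl⟩ := exists_eq_snoc y
  obtain ⟨w, r, rfl⟩ := exists_eq_snoc y'
  rw [snoc_snoc_mem_sphere_iff] at hx hy
  rw [← sq_le_sq₀ dist_nonneg (by positivity), Function.comp_apply, Function.comp_apply,
    doubling_crush_snoc_snoc, doubling_crush_snoc_snoc, dist_snoc_sq, mul_pow, dist_snoc_sq,
    dist_snoc_sq, dist_eq_norm, dist_eq_norm]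
  calc _ ≤ 16 * (‖v - w‖ ^ 2 + (√(p ^ 2 + q ^ 2) - √(r ^ 2 + s ^ 2)) ^ 2) :=
        doubling_dist_sq_le hx hy
    _ ≤ _ := by
      have := sq_sqrt_sub_sqrt_le p q r s
      push_cast
      linarith

theorem doubling_crush_image_sphere (m : ℕ) :
    (doubling (m + 2) ∘ crush (m + 2)) '' sphere 0 1 = sphere 0 1 := by
  apply subset_antisymm
  · rintro _ ⟨x, hx, rfl⟩
    obtain ⟨x', q, rfl⟩ := exists_eq_snoc x
    obtain ⟨v, p, rfl⟩ := exists_eq_snoc x'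
    rw [snoc_snoc_mem_sphere_iff] at hx
    rw [Function.comp_apply, doubling_crush_snoc_snoc, snoc_mem_sphere_iff]
    exact norm_sq_doubling_add_sq hx
  · intro y hy
    obtain ⟨u, β, rfl⟩ := exists_eq_snoc y
    obtain ⟨v, a, ha, hva, rfl, rfl⟩ := exists_doubling_eq ((snoc_mem_sphere_iff u β).1 hy)
    have hrad : √(a ^ 2 + 0 ^ 2) = a := by simp [Real.sqrt_sq ha]
    refine ⟨snoc (snoc v a) 0, ?_, ?_⟩
    · rwa [snoc_snoc_mem_sphere_iff, hrad]
    · rw [Function.comp_apply, doubling_crush_snoc_snoc, hrad]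

theorem doubling_crush_eq_northPole {m : ℕ} {x : EuclideanSpace ℝ (Fin (m + 3))}
    (hx : x ∈ sphere 0 1) (h : ∀ i : Fin (m + 3), (i : ℕ) < m + 1 → x i = 0) :
    (doubling (m + 2) ∘ crush (m + 2)) x = northPole (m + 2) := by
  obtain ⟨x', q, rfl⟩ := exists_eq_snoc x
  obtain ⟨v, p, rfl⟩ := exists_eq_snoc x'
  have hv : v = 0 := by
    ext j
    simpa using h j.castSucc.castSucc (by simp [Fin.is_le])
  rw [snoc_snoc_mem_sphere_iff, hv, norm_zero, zero_pow two_ne_zero, zero_add,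
    pow_eq_one_iff_of_nonneg (Real.sqrt_nonneg _) two_ne_zero] at hx
  rw [Function.comp_apply, doubling_crush_snoc_snoc, hv, smul_zero, hx, northPole_eq_snoc]
  norm_num

theorem doubling_crush_eq_southPole {m : ℕ} {x : EuclideanSpace ℝ (Fin (m + 3))}
    (hp : x ⟨m + 1, by omega⟩ = 0) (hq : x ⟨m + 2, by omega⟩ = 0) :
    (doubling (m + 2) ∘ crush (m + 2)) x = southPole (m + 2) := by
  obtain ⟨x', q, rfl⟩ := exists_eq_snoc x
  obtain ⟨v, p, rfl⟩ := exists_eq_snoc x'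
  simp only [snoc_snoc_apply_self, snoc_apply_self] at hp hq
  rw [Function.comp_apply, doubling_crush_snoc_snoc, hp, hq, southPole_eq_snoc]
  norm_num

theorem crushing_composite_four_contracting (n : ℕ) (hn : 2 ≤ n) :
    LipschitzOnWith 4 (doubling n ∘ crush n)
      (Metric.sphere (0 : EuclideanSpace ℝ (Fin (n + 1))) 1) ∧
    (doubling n ∘ crush n) '' Metric.sphere (0 : EuclideanSpace ℝ (Fin (n + 1))) 1 =
      Metric.sphere (0 : EuclideanSpace ℝ (Fin n)) 1 ∧
    (∀ x ∈ Metric.sphere (0 : EuclideanSpace ℝ (Fin (n + 1))) 1,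
      (∀ i : Fin (n + 1), (i : ℕ) < n - 1 → x i = 0) →
        (doubling n ∘ crush n) x = northPole n) ∧
    (∀ x ∈ Metric.sphere (0 : EuclideanSpace ℝ (Fin (n + 1))) 1,
      x ⟨n - 1, by omega⟩ = 0 → x ⟨n, by omega⟩ = 0 →
        (doubling n ∘ crush n) x = southPole n) := by
  obtain ⟨m, rfl⟩ : ∃ m, n = m + 2 := ⟨n - 2, by omega⟩
  exact ⟨lipschitzOnWith_doubling_crush m, doubling_crush_image_sphere m,
    fun x hx h => doubling_crush_eq_northPole hx h,
    fun x _ hp hq => doubling_crush_eq_southPole hp hq⟩
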